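/- Let p, q be distinct primes with p ≡ q ≡ 1 (mod 4). Then there exist infinitely many primes w with w ≡ 7 (mod 8), (2/w) = 1, (p/w) = -1, (q/w) = -1, gcd(w, 16pq) = 1, and gcd((w-1)/2, 16pq) = 1. -/

import Mathlib

/-!
Pick nonsquares `b` mod `p` and `c` mod `q`. By the Chinese remainder theorem the conditions
`w ≡ 7 (mod 8)`, `w ≡ b (mod p)`, `w ≡ c (mod q)` define a unit residue class modulo `8pq`, which
contains infinitely many primes by Dirichlet's theorem. For such a prime, `(2/w) = 1` by the
supplementary law and `(p/w) = (w/p) = (b/p) = -1` by reciprocity (as `p ≡ 1 (mod 4)`), and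
likewise for `q`. Since `0` and `1` are squares, `w ≢ 0, 1` modulo `p` and `q`, so neither `w`
nor `(w - 1)/2` is divisible by `p` or `q`; both are odd because `w ≡ 7 (mod 8)`.
-/

theorem ZMod.natCast_eq_of_natCast_eq_chineseRemainder_symm {m n w : ℕ} (h : m.Coprime n)
    {x : ZMod m} {y : ZMod n} (hw : (w : ZMod (m * n)) = (ZMod.chineseRemainder h).symm (x, y)) :
    (w : ZMod m) = x ∧ (w : ZMod n) = y := by
  simpa [Prod.ext_iff] using congrArg (ZMod.chineseRemainder h) hw

theorem ZMod.isUnit_chineseRemainder_symm {m n : ℕ} (h : m.Coprime n) {x : ZMod m} {y : ZMod n}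
    (hx : IsUnit x) (hy : IsUnit y) : IsUnit ((ZMod.chineseRemainder h).symm (x, y)) :=
  (Prod.isUnit_iff.2 ⟨hx, hy⟩).map (ZMod.chineseRemainder h).symm

theorem ZMod.exists_not_isSquare {p : ℕ} [Fact p.Prime] (hp : p ≠ 2) : ∃ b : ZMod p, ¬IsSquare b :=
  FiniteField.exists_nonsquare (by rwa [ZMod.ringChar_zmod_n])

theorem isUnit_of_not_isSquare {G₀ : Type*} [GroupWithZero G₀] {x : G₀} (h : ¬IsSquare x) :
    IsUnit x :=
  Ne.isUnit (by rintro rfl; exact h ⟨0, by simp⟩)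

theorem not_dvd_of_not_isSquare_natCast {p n : ℕ} (h : ¬IsSquare (n : ZMod p)) : ¬p ∣ n :=
  fun hpn ↦ h ⟨0, by simp [(ZMod.natCast_eq_zero_iff n p).2 hpn]⟩

theorem not_dvd_sub_one_of_not_isSquare_natCast {p n : ℕ} (h : ¬IsSquare (n : ZMod p)) :
    ¬p ∣ n - 1 := by
  rcases n with _ | n
  · exact absurd ⟨0, by simp⟩ h
  · intro hpn
    refine h ⟨1, ?_⟩
    simp [(ZMod.natCast_eq_zero_iff n p).2 (by simpa using hpn)]

theorem legendreSym_eq_neg_one_of_not_isSquare_natCast {p w : ℕ} [Fact p.Prime] [Fact w.Prime]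
    (hp : p % 4 = 1) (hw : w ≠ 2) (h : ¬IsSquare (w : ZMod p)) : legendreSym w p = -1 := by
  rw [legendreSym.quadratic_reciprocity_one_mod_four hp hw, legendreSym.eq_neg_one_iff']
  exact h

theorem legendreSym_two_eq_one_of_mod_eight_eq_seven {w : ℕ} [Fact w.Prime] (hw : w % 8 = 7) :
    legendreSym w 2 = 1 := by
  rw [legendreSym.at_two (by omega), ZMod.χ₈_nat_eq_if_mod_eight]
  simp [hw, show w % 2 = 1 by omega]

theorem Nat.coprime_sixteen_mul_mul {n p q : ℕ} (hp : p.Prime) (hq : q.Prime) (hn : Odd n)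
    (hpn : ¬p ∣ n) (hqn : ¬q ∣ n) : n.Coprime (16 * p * q) := by
  have h16 : n.Coprime 16 := (Nat.coprime_two_right.2 hn).pow_right 4
  exact (h16.mul_right (hp.coprime_iff_not_dvd.2 hpn).symm).mul_right
    (hq.coprime_iff_not_dvd.2 hqn).symm

/-- For distinct primes `p ≡ q ≡ 1 (mod 4)`, there are infinitely many primes
`w ≡ 7 (mod 8)` with `(2/w) = 1`, `(p/w) = (q/w) = -1`, `gcd(w, 16pq) = 1`
and `gcd((w-1)/2, 16pq) = 1`. -/
theorem stmt14 (p q : ℕ) (hp : p.Prime) (hq : q.Prime) (hpq : p ≠ q)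
    (hp4 : p % 4 = 1) (hq4 : q % 4 = 1) :
    {w : ℕ | ∃ hw : w.Prime, w % 8 = 7 ∧
      @legendreSym w ⟨hw⟩ 2 = 1 ∧ @legendreSym w ⟨hw⟩ p = -1 ∧
      @legendreSym w ⟨hw⟩ q = -1 ∧
      Nat.gcd w (16 * p * q) = 1 ∧
      Nat.gcd ((w - 1) / 2) (16 * p * q) = 1}.Infinite := by
  have := Fact.mk hp
  have := Fact.mk hq
  have : NeZero (8 * (p * q)) := ⟨by simp [hp.ne_zero, hq.ne_zero]⟩
  obtain ⟨b, hb⟩ := ZMod.exists_not_isSquare (p := p) (by omega)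
  obtain ⟨c, hc⟩ := ZMod.exists_not_isSquare (p := q) (by omega)
  have hpq' : p.Coprime q := (Nat.coprime_primes hp hq).2 hpq
  have h8pq : Nat.Coprime 8 (p * q) := Nat.Coprime.pow_left 3 <| Nat.coprime_two_left.2 <|
    Nat.odd_mul.2 ⟨Nat.odd_iff.2 (by omega), Nat.odd_iff.2 (by omega)⟩
  have hu : IsUnit
      ((ZMod.chineseRemainder h8pq).symm (7, (ZMod.chineseRemainder hpq').symm (b, c))) := ZMod.isUnit_chineseRemainder_symm _ (by decide)
    (ZMod.isUnit_chineseRemainder_symm _ (isUnit_of_not_isSquare hb) (isUnit_of_not_isSquare hc))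
  refine (Nat.infinite_setOfPred_prime_and_eq_mod hu).mono ?_
  rintro w ⟨hw, hwu⟩
  have := Fact.mk hw
  obtain ⟨hw8, hwpq⟩ := ZMod.natCast_eq_of_natCast_eq_chineseRemainder_symm h8pq hwu
  obtain ⟨hwp, hwq⟩ := ZMod.natCast_eq_of_natCast_eq_chineseRemainder_symm hpq' hwpq
  replace hw8 : w % 8 = 7 := by rw [← ZMod.val_natCast, hw8]; rfl
  replace hb : ¬IsSquare (w : ZMod p) := hwp ▸ hb
  replace hc : ¬IsSquare (w : ZMod q) := hwq ▸ hc
  have hhalf {r : ℕ} (h : ¬IsSquare (w : ZMod r)) : ¬r ∣ (w - 1) / 2 := fun hr ↦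
    not_dvd_sub_one_of_not_isSquare_natCast h (hr.trans (Nat.div_dvd_of_dvd (by omega)))
  refine ⟨hw, hw8, legendreSym_two_eq_one_of_mod_eight_eq_seven hw8,
    legendreSym_eq_neg_one_of_not_isSquare_natCast hp4 (by omega) hb,
    legendreSym_eq_neg_one_of_not_isSquare_natCast hq4 (by omega) hc,
    Nat.coprime_sixteen_mul_mul hp hq (Nat.odd_iff.2 (by omega))
      (not_dvd_of_not_isSquare_natCast hb) (not_dvd_of_not_isSquare_natCast hc),
    Nat.coprime_sixteen_mul_mul hp hq (Nat.odd_iff.2 (by omega)) (hhalf hb) (hhalf hc)⟩
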